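/- Let H satisfy the k-th no-resonance condition with eigenbasis {|E⟩}, and let |Ψ₀⟩, |z⟩ be unit vectors with p_avg(z) = Σ_E |⟨z|E⟩⟨E|Ψ₀⟩|² > 0. Define q_z(E) = |⟨z|E⟩⟨E|Ψ₀⟩|²/p_avg(z) and D_β(z)⁻¹ = Σ_E q_z(E)². Then |E_t[p̃(z,t)^k] − k!| ≤ k! · (k choose 2) · D_β(z)⁻¹, where E_t denotes the infinite-time average and p̃(z,t) = |⟨z|e^{-iHt}|Ψ₀⟩|²/p_avg(z). -/

import Mathlib

open Filter
open scoped BigOperators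

/-- The `k`-th no-resonance condition for eigenvalues `E : Fin D → ℝ`. -/
def NoResonance {D : ℕ} (E : Fin D → ℝ) (k : ℕ) : Prop :=
  ∀ α β : Fin k → Fin D,
    (∑ i, E (α i)) = (∑ i, E (β i)) →
    Multiset.map α Finset.univ.val = Multiset.map β Finset.univ.val

/-- `HasTimeAvg f L` : the infinite-time average `lim_{T→∞} (1/T)∫_0^T f(t) dt` equals `L`. -/
def HasTimeAvg (f : ℝ → ℝ) (L : ℝ) : Prop :=
  Tendsto (fun T : ℝ => (1 / T) * ∫ t in (0:ℝ)..T, f t) atTop (nhds L)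

/-- The amplitude `⟨z|e^{-iHt}|Ψ₀⟩ = ∑_j ⟨z|E_j⟩ e^{-iE_j t} ⟨E_j|Ψ₀⟩` in the eigenbasis `v`. -/
noncomputable def amp {D : ℕ} (E : Fin D → ℝ) (v : Fin D → EuclideanSpace ℂ (Fin D))
    (z Ψ₀ : EuclideanSpace ℂ (Fin D)) (t : ℝ) : ℂ :=
  ∑ j, (inner ℂ z (v j) : ℂ) * Complex.exp (-Complex.I * (E j : ℂ) * (t : ℂ)) *
    (inner ℂ (v j) Ψ₀ : ℂ)

/-- `p_avg(z) = ∑_E |⟨z|E⟩⟨E|Ψ₀⟩|²`. -/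
noncomputable def pavg {D : ℕ} (v : Fin D → EuclideanSpace ℂ (Fin D))
    (z Ψ₀ : EuclideanSpace ℂ (Fin D)) : ℝ :=
  ∑ j, ‖(inner ℂ z (v j) : ℂ) * (inner ℂ (v j) Ψ₀ : ℂ)‖ ^ 2

/-- `q_z(E) = |⟨z|E⟩⟨E|Ψ₀⟩|² / p_avg(z)`. -/
noncomputable def qz {D : ℕ} (v : Fin D → EuclideanSpace ℂ (Fin D))
    (z Ψ₀ : EuclideanSpace ℂ (Fin D)) (j : Fin D) : ℝ :=
  ‖(inner ℂ z (v j) : ℂ) * (inner ℂ (v j) Ψ₀ : ℂ)‖ ^ 2 / pavg v z Ψ₀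

/-! In the eigenbasis, `p(z,t)^k = |amp|^(2k)` is a finite trigonometric sum over pairs of
index tuples `(α, β)` with frequencies `∑ E ∘ α - ∑ E ∘ β`, and its time average keeps exactly the
terms of frequency zero. By no-resonance these are the pairs in which `β` is a rearrangement of
`α`, so the normalised moment is `∑_α r(α) ∏ q(α i)`, where `r(α)` counts the rearrangements of
`α`. Now `r(α) ≤ k!`, with equality for injective `α`, and under the product measure `q^⊗k` a
tuple fails to be injective with probability at most `(k choose 2) ∑ q²`, by a union bound over
pairs of positions. -/

open Complex Finset
open scoped ComplexConjugate Topology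

section Rearrangements

variable {κ ι : Type*} [Fintype κ]

@[to_additive]
theorem prod_comp_eq_of_map_eq {M : Type*} [CommMonoid M] {α β : κ → ι}
    (h : Multiset.map α univ.val = Multiset.map β univ.val) (f : ι → M) :
    ∏ i, f (α i) = ∏ i, f (β i) := by
  simp only [← prod_map_val, ← Function.comp_apply (f := f), ← Multiset.map_map, h]

theorem exists_perm_comp_eq_of_map_eq [DecidableEq ι] {α β : κ → ι}
    (h : Multiset.map α univ.val = Multiset.map β univ.val) :
    ∃ σ : Equiv.Perm κ, α ∘ σ = β := by
  have hfiber (j : ι) : Fintype.card {i // β i = j} = Fintype.card {i // α i = j} := by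
    have := congrArg (Multiset.count j) h
    simp only [Multiset.count_map, Fintype.card_subtype, Finset.card, Finset.filter_val] at this ⊢
    simpa only [eq_comm] using this.symm
  exact ⟨Equiv.ofFiberEquiv fun j => Fintype.equivOfCardEq (hfiber j),
    funext (Equiv.ofFiberEquiv_map _)⟩

variable [DecidableEq κ] [Fintype ι] [DecidableEq ι]

def rearrangementCount (α : κ → ι) : ℕ :=
  #{β : κ → ι | Multiset.map β univ.val = Multiset.map α univ.val}

theorem filter_map_eq_eq_image_comp_perm (α : κ → ι) :
    ({β | Multiset.map β univ.val = Multiset.map α univ.val} : Finset (κ → ι))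
      = univ.image fun σ : Equiv.Perm κ => α ∘ σ := by
  ext β
  simp only [mem_filter, mem_univ, true_and, mem_image]
  constructor
  · intro h
    exact exists_perm_comp_eq_of_map_eq h.symm
  · rintro ⟨σ, -, rfl⟩
    rw [← Multiset.map_map, Multiset.map_univ_val_equiv]

theorem rearrangementCount_le_factorial (α : κ → ι) :
    rearrangementCount α ≤ (Fintype.card κ).factorial := by
  unfold rearrangementCount
  rw [filter_map_eq_eq_image_comp_perm, ← Fintype.card_perm]
  exact card_image_le

theorem rearrangementCount_of_injective {α : κ → ι} (hα : Function.Injective α) :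
    rearrangementCount α = (Fintype.card κ).factorial := by
  have hinj : Function.Injective fun σ : Equiv.Perm κ => α ∘ σ :=
    fun σ τ h => Equiv.ext fun i => hα (congrFun h i)
  rw [rearrangementCount, filter_map_eq_eq_image_comp_perm, card_image_of_injective _ hinj,
    card_univ, Fintype.card_perm]

end Rearrangements

section ProductMeasure

variable {κ ι : Type*} [Fintype κ] [DecidableEq κ] [Fintype ι] [DecidableEq ι]
  {q : ι → ℝ}

theorem sum_prod_filter_forall_mem_eq (hq : ∑ j, q j = 1) (s : Finset κ) (j : ι) :
    ∑ α : κ → ι with ∀ l ∈ s, α l = j, ∏ l, q (α l) = q j ^ #s := by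
  -- the indicator of the event factorises over the coordinates
  let g : κ → ι → ℝ := fun l m => if l ∈ s → m = j then q m else 0
  calc ∑ α : κ → ι with ∀ l ∈ s, α l = j, ∏ l, q (α l)
      = ∑ α : κ → ι, ∏ l, g l (α l) := by
        rw [sum_filter]
        simp only [g, Fintype.prod_ite_zero]
    _ = ∏ l, ∑ m, g l m := (Fintype.prod_sum g).symm
    _ = ∏ l, if l ∈ s then q j else 1 := by
        refine Fintype.prod_congr _ _ fun l => ?_
        by_cases hl : l ∈ s <;> simp [g, hl, hq]
    _ = q j ^ #s := by rw [Fintype.prod_ite_mem, prod_const]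

theorem sum_prod_filter_not_injective_le (hq0 : ∀ j, 0 ≤ q j) (hq : ∑ j, q j = 1) :
    ∑ α : κ → ι with ¬ Function.Injective α, ∏ l, q (α l)
      ≤ (Fintype.card κ).choose 2 * ∑ j, q j ^ 2 := by
  have hQ (α : κ → ι) : 0 ≤ ∏ l, q (α l) := prod_nonneg fun l _ => hq0 (α l)
  calc ∑ α : κ → ι with ¬ Function.Injective α, ∏ l, q (α l)
      ≤ ∑ α : κ → ι, ∑ s ∈ powersetCard 2 univ, ∑ j,
          if ∀ l ∈ s, α l = j then ∏ l, q (α l) else 0 := by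
        rw [sum_filter]
        refine sum_le_sum fun α _ => ?_
        have hterm (s : Finset κ) (j : ι) :
            0 ≤ if ∀ l ∈ s, α l = j then ∏ l, q (α l) else 0 := by
          split_ifs <;> simp [hQ]
        split_ifs with hα
        · exact sum_nonneg fun s _ => sum_nonneg fun j _ => hterm s j
        obtain ⟨a, b, hab, hne⟩ := Function.not_injective_iff.1 hα
        have hpair : {a, b} ∈ powersetCard 2 univ :=
          mem_powersetCard.2 ⟨subset_univ _, card_pair hne⟩
        calc ∏ l, q (α l)
            = if ∀ l ∈ ({a, b} : Finset κ), α l = α a then ∏ l, q (α l) else 0 := by simp [hab]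
          _ ≤ _ := single_le_sum (fun j _ => hterm _ j) (mem_univ (α a))
          _ ≤ _ := single_le_sum (fun s _ => sum_nonneg fun j _ => hterm s j) hpair
    _ = ∑ s ∈ powersetCard 2 univ, ∑ j, q j ^ #s := by
        rw [sum_comm]
        refine sum_congr rfl fun s _ => ?_
        rw [sum_comm]
        exact sum_congr rfl fun j _ => by rw [← sum_filter, sum_prod_filter_forall_mem_eq hq]
    _ = (Fintype.card κ).choose 2 * ∑ j, q j ^ 2 := by
        rw [sum_congr rfl fun s hs => by rw [(mem_powersetCard.1 hs).2], sum_const,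
          card_powersetCard, card_univ, nsmul_eq_mul]

theorem abs_sum_rearrangementCount_mul_prod_sub_factorial_le (hq0 : ∀ j, 0 ≤ q j)
    (hq : ∑ j, q j = 1) :
    |∑ α : κ → ι, (rearrangementCount α : ℝ) * ∏ l, q (α l) - (Fintype.card κ).factorial|
      ≤ (Fintype.card κ).factorial * (Fintype.card κ).choose 2 * ∑ j, q j ^ 2 := by
  set n := Fintype.card κ
  have hQ (α : κ → ι) : 0 ≤ ∏ l, q (α l) := prod_nonneg fun l _ => hq0 (α l)
  have htotal : ∑ α : κ → ι, ∏ l, q (α l) = 1 := by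
    rw [← Fintype.prod_sum fun _ => q, hq, prod_const_one]
  have hdefect : (n.factorial : ℝ) - ∑ α : κ → ι, (rearrangementCount α : ℝ) * ∏ l, q (α l)
      = ∑ α : κ → ι, (n.factorial - rearrangementCount α : ℝ) * ∏ l, q (α l) := by
    simp only [sub_mul, sum_sub_distrib, ← mul_sum, htotal, mul_one]
  have hle (α : κ → ι) : (rearrangementCount α : ℝ) ≤ n.factorial := by
    exact_mod_cast rearrangementCount_le_factorial α
  rw [abs_sub_comm, abs_of_nonneg, hdefect]
  · calc ∑ α : κ → ι, (n.factorial - rearrangementCount α : ℝ) * ∏ l, q (α l)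
        ≤ ∑ α : κ → ι with ¬ Function.Injective α, n.factorial * ∏ l, q (α l) := by
          rw [sum_filter]
          refine sum_le_sum fun α _ => ?_
          split_ifs with hα
          · rw [rearrangementCount_of_injective hα, sub_self, zero_mul]
          · have := (rearrangementCount α).cast_nonneg (α := ℝ)
            exact mul_le_mul_of_nonneg_right (by linarith) (hQ α)
      _ ≤ n.factorial * (n.choose 2 * ∑ j, q j ^ 2) := by
          rw [← mul_sum]
          gcongr
          exact sum_prod_filter_not_injective_le hq0 hq
      _ = _ := by ring
  · rw [hdefect]
    exact sum_nonneg fun α _ => mul_nonneg (sub_nonneg.2 (hle α)) (hQ α)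

end ProductMeasure

section TimeAverage

theorem hasTimeAvg_of_tendsto_ofReal {f : ℝ → ℝ} {L : ℝ}
    (h : Tendsto (fun T : ℝ => (1 / (T : ℂ)) * ∫ t in (0:ℝ)..T, (f t : ℂ)) atTop (𝓝 L)) :
    HasTimeAvg f L := by
  refine tendsto_ofReal_iff.1 (h.congr fun T => ?_)
  rw [intervalIntegral.integral_ofReal]
  push_cast
  rfl

theorem HasTimeAvg.div_const {f : ℝ → ℝ} {L : ℝ} (h : HasTimeAvg f L) (c : ℝ) :
    HasTimeAvg (fun t => f t / c) (L / c) := by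
  refine (Tendsto.div_const h c).congr fun T => ?_
  rw [intervalIntegral.integral_div]
  ring

theorem tendsto_timeAvg_exp_neg_I_mul (ω : ℝ) :
    Tendsto (fun T : ℝ => (1 / (T : ℂ)) * ∫ t in (0:ℝ)..T, exp (-I * ω * t)) atTop
      (𝓝 (if ω = 0 then 1 else 0)) := by
  split_ifs with hω
  · refine tendsto_const_nhds.congr' ?_
    filter_upwards [eventually_ne_atTop 0] with T hT
    simp [hω, hT]
  · have hc : -I * ω ≠ 0 := by simp [hω]
    have hbound (T : ℝ) : ‖∫ t in (0:ℝ)..T, exp (-I * ω * t)‖ ≤ 2 / ‖-I * ω‖ := by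
      rw [integral_exp_mul_complex hc, norm_div]
      gcongr
      refine (norm_sub_le _ _).trans_eq ?_
      norm_num [norm_exp]
    refine squeeze_zero_norm' ?_ ((tendsto_inv_atTop_zero.mul_const (2 / ‖-I * ω‖)).trans ?_)
    · filter_upwards [eventually_gt_atTop 0] with T hT
      rw [norm_mul, norm_div, norm_one, norm_real, Real.norm_of_nonneg hT.le, one_div]
      exact mul_le_mul_of_nonneg_left (hbound T) (inv_nonneg.2 hT.le)
    · simp

variable {ι κ : Type*} [Fintype ι] [Fintype κ]

noncomputable def trigSum (a : ι → ℂ) (ω : ι → ℝ) (t : ℝ) : ℂ :=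
  ∑ j, a j * exp (-I * ω j * t)

theorem tendsto_timeAvg_trigSum (a : ι → ℂ) (ω : ι → ℝ) :
    Tendsto (fun T : ℝ => (1 / (T : ℂ)) * ∫ t in (0:ℝ)..T, trigSum a ω t) atTop
      (𝓝 (∑ j, if ω j = 0 then a j else 0)) := by
  have hint (T : ℝ) : (1 / (T : ℂ)) * ∫ t in (0:ℝ)..T, trigSum a ω t
      = ∑ j, a j * ((1 / (T : ℂ)) * ∫ t in (0:ℝ)..T, exp (-I * ω j * t)) := by
    simp only [trigSum]
    rw [intervalIntegral.integral_finsetSum fun j _ => by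
      apply Continuous.intervalIntegrable; fun_prop]
    simp only [intervalIntegral.integral_const_mul, mul_sum]
    exact sum_congr rfl fun j _ => by ring
  simp only [hint]
  refine tendsto_finsetSum _ fun j _ => ?_
  simpa using (tendsto_timeAvg_exp_neg_I_mul (ω j)).const_mul (a j)

theorem trigSum_mul (a : ι → ℂ) (ω : ι → ℝ) (b : κ → ℂ) (ν : κ → ℝ) (t : ℝ) :
    trigSum a ω t * trigSum b ν t
      = trigSum (fun p : ι × κ => a p.1 * b p.2) (fun p => ω p.1 + ν p.2) t := by
  simp only [trigSum, sum_mul_sum, ← Finset.univ_product_univ, sum_product]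
  refine sum_congr rfl fun i _ => sum_congr rfl fun j _ => ?_
  push_cast
  rw [show -I * (ω i + ν j) * t = -I * ω i * t + -I * ν j * t by ring, exp_add]
  ring

theorem trigSum_pow (a : ι → ℂ) (ω : ι → ℝ) (k : ℕ) (t : ℝ) :
    trigSum a ω t ^ k
      = trigSum (fun α : Fin k → ι => ∏ i, a (α i)) (fun α => ∑ i, ω (α i)) t := by
  simp only [trigSum, Fintype.sum_pow, prod_mul_distrib, ← exp_sum]
  push_cast
  simp only [mul_sum, sum_mul]

theorem conj_trigSum (a : ι → ℂ) (ω : ι → ℝ) (t : ℝ) :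
    conj (trigSum a ω t) = trigSum (fun j => conj (a j)) (fun j => -ω j) t := by
  simp only [trigSum, map_sum, map_mul, ← exp_conj, map_neg, conj_I, conj_ofReal, ofReal_neg,
    neg_neg, mul_neg, neg_mul]

theorem sq_norm_trigSum_pow (a : ι → ℂ) (ω : ι → ℝ) (k : ℕ) (t : ℝ) :
    (((‖trigSum a ω t‖ ^ 2) ^ k : ℝ) : ℂ)
      = trigSum (fun p : (Fin k → ι) × (Fin k → ι) => (∏ i, a (p.1 i)) * conj (∏ i, a (p.2 i)))
          (fun p => ∑ i, ω (p.1 i) - ∑ i, ω (p.2 i)) t := by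
  push_cast
  rw [← mul_conj', mul_pow, conj_trigSum, trigSum_pow, trigSum_pow, trigSum_mul]
  simp only [map_prod, sum_neg_distrib, ← sub_eq_add_neg]

end TimeAverage

section Resonance

variable {D k : ℕ} {E : Fin D → ℝ}

theorem NoResonance.sum_eq_iff (hE : NoResonance E k) {α β : Fin k → Fin D} :
    ∑ i, E (α i) = ∑ i, E (β i) ↔ Multiset.map α univ.val = Multiset.map β univ.val :=
  ⟨hE α β, fun h => sum_comp_eq_of_map_eq h E⟩

theorem NoResonance.sum_resonant_coeff_eq (hE : NoResonance E k) (a : Fin D → ℂ) :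
    (∑ p : (Fin k → Fin D) × (Fin k → Fin D),
        if ∑ i, E (p.1 i) - ∑ i, E (p.2 i) = 0 then (∏ i, a (p.1 i)) * conj (∏ i, a (p.2 i))
        else 0)
      = ((∑ α : Fin k → Fin D, (rearrangementCount α : ℝ) * ∏ i, ‖a (α i)‖ ^ 2 : ℝ) : ℂ) := by
  rw [Fintype.sum_prod_type, ofReal_sum]
  refine sum_congr rfl fun α _ => ?_
  calc (∑ β : Fin k → Fin D,
          if ∑ i, E (α i) - ∑ i, E (β i) = 0 then (∏ i, a (α i)) * conj (∏ i, a (β i)) else 0)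
      = ∑ β : Fin k → Fin D with Multiset.map β univ.val = Multiset.map α univ.val,
          (∏ i, a (α i)) * conj (∏ i, a (β i)) := by
        rw [sum_filter]
        refine sum_congr rfl fun β _ => if_congr ?_ rfl rfl
        rw [sub_eq_zero, hE.sum_eq_iff, eq_comm]
    _ = ∑ β : Fin k → Fin D with Multiset.map β univ.val = Multiset.map α univ.val,
          ((‖∏ i, a (α i)‖ ^ 2 : ℝ) : ℂ) := by
        refine sum_congr rfl fun β hβ => ?_
        rw [prod_comp_eq_of_map_eq (mem_filter.1 hβ).2, mul_conj']
        push_cast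
        rfl
    _ = _ := by
        rw [sum_const, rearrangementCount, norm_prod, ← prod_pow, nsmul_eq_mul]
        push_cast
        rfl

theorem hasTimeAvg_sq_norm_trigSum_pow (hE : NoResonance E k) (a : Fin D → ℂ) :
    HasTimeAvg (fun t => (‖trigSum a E t‖ ^ 2) ^ k)
      (∑ α : Fin k → Fin D, (rearrangementCount α : ℝ) * ∏ i, ‖a (α i)‖ ^ 2) := by
  have h := tendsto_timeAvg_trigSum
    (fun p : (Fin k → Fin D) × (Fin k → Fin D) => (∏ i, a (p.1 i)) * conj (∏ i, a (p.2 i)))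
    (fun p => ∑ i, E (p.1 i) - ∑ i, E (p.2 i))
  rw [hE.sum_resonant_coeff_eq] at h
  refine hasTimeAvg_of_tendsto_ofReal (h.congr fun T => ?_)
  simp only [sq_norm_trigSum_pow]

end Resonance

theorem qz_nonneg {D : ℕ} (v : Fin D → EuclideanSpace ℂ (Fin D)) (z Ψ₀ : EuclideanSpace ℂ (Fin D))
    (j : Fin D) : 0 ≤ qz v z Ψ₀ j :=
  div_nonneg (sq_nonneg _) (sum_nonneg fun _ _ => sq_nonneg _)

theorem sum_qz_eq_one {D : ℕ} {v : Fin D → EuclideanSpace ℂ (Fin D)}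
    {z Ψ₀ : EuclideanSpace ℂ (Fin D)} (hpos : 0 < pavg v z Ψ₀) : ∑ j, qz v z Ψ₀ j = 1 := by
  simp only [qz]
  rw [← sum_div, div_eq_one_iff_eq hpos.ne']
  rfl

theorem temporal_porter_thomas_general {D : ℕ} (k : ℕ) (E : Fin D → ℝ) (hE : NoResonance E k)
    (v : Fin D → EuclideanSpace ℂ (Fin D))
    (z Ψ₀ : EuclideanSpace ℂ (Fin D))
    (hpos : 0 < pavg v z Ψ₀) :
    ∃ L : ℝ,
      HasTimeAvg (fun t => (‖amp E v z Ψ₀ t‖ ^ 2 / pavg v z Ψ₀) ^ k) L ∧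
      |L - (k.factorial : ℝ)| ≤
        (k.factorial : ℝ) * (k.choose 2) * (∑ j, (qz v z Ψ₀ j) ^ 2) := by
  set c : Fin D → ℂ := fun j => inner ℂ z (v j) * inner ℂ (v j) Ψ₀
  have hamp : amp E v z Ψ₀ = trigSum c E := by
    funext t
    simp only [amp, trigSum, c]
    exact sum_congr rfl fun j _ => by ring
  have hprod (α : Fin k → Fin D) :
      ∏ i, qz v z Ψ₀ (α i) = (∏ i, ‖c (α i)‖ ^ 2) / pavg v z Ψ₀ ^ k := by
    simp only [qz]
    rw [prod_div_distrib, prod_const, card_univ, Fintype.card_fin]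
  refine ⟨(∑ α : Fin k → Fin D, (rearrangementCount α : ℝ) * ∏ i, ‖c (α i)‖ ^ 2)
    / pavg v z Ψ₀ ^ k, ?_, ?_⟩
  · simpa only [hamp, div_pow] using (hasTimeAvg_sq_norm_trigSum_pow hE c).div_const _
  · have h := abs_sum_rearrangementCount_mul_prod_sub_factorial_le (κ := Fin k) (qz_nonneg v z Ψ₀)
      (sum_qz_eq_one hpos)
    simpa only [hprod, Fintype.card_fin, ← mul_div_assoc, ← sum_div] using h

/-- **Temporal Porter–Thomas distribution.** If `H` satisfies the `k`-th no-resonance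
condition, the temporal `k`-th moment of `p̃(z,t) = p(z,t)/p_avg(z)` exists and deviates from
`k!` by at most `k!·(k choose 2)·D_β(z)⁻¹`, where `D_β(z)⁻¹ = ∑_E q_z(E)²`. -/
theorem temporal_porter_thomas {D : ℕ} (k : ℕ) (E : Fin D → ℝ) (hE : NoResonance E k)
    (v : Fin D → EuclideanSpace ℂ (Fin D)) (hv : Orthonormal ℂ v)
    (z Ψ₀ : EuclideanSpace ℂ (Fin D)) (hz : ‖z‖ = 1) (hΨ : ‖Ψ₀‖ = 1)
    (hpos : 0 < pavg v z Ψ₀) :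
    ∃ L : ℝ,
      HasTimeAvg (fun t => (‖amp E v z Ψ₀ t‖ ^ 2 / pavg v z Ψ₀) ^ k) L ∧
      |L - (k.factorial : ℝ)| ≤
        (k.factorial : ℝ) * (k.choose 2) * (∑ j, (qz v z Ψ₀ j) ^ 2) :=
  temporal_porter_thomas_general k E hE v z Ψ₀ hpos
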